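/- arXiv:2605.13592 — 4 statements merged into one kernel-verified Lean document; each statement's English description precedes it below -/
import Mathlib

section
/- Fix an integer n ≥ 3 and α > 0, and let u ∈ C²([0,τ)) be a solution of the profile ODE with parameter α on [0,τ). If ρ₀ ∈ (0,τ) is such that u(ρ) ≥ 0 for every ρ ∈ [0,ρ₀], then u'(ρ) < 0 for every ρ ∈ (0,ρ₀]. -/
open Set MeasureTheory Filter

noncomputable section

/-- `u` (with derivative `u'` and second derivative `u''`) is a C² solution on the set `s`
of the profile ODE
`u'' + ((n+1)/ρ)·u' + u + (ρ/2)·u' + 2n·u² + 2ρ·u·u' = 0`  (for `ρ > 0`)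
with initial conditions `u 0 = α`, `u' 0 = 0`. -/
def IsProfileSolOn (n : ℕ) (α : ℝ) (u u' u'' : ℝ → ℝ) (s : Set ℝ) : Prop :=
  (∀ ρ ∈ s, HasDerivWithinAt u (u' ρ) s ρ) ∧
  (∀ ρ ∈ s, HasDerivWithinAt u' (u'' ρ) s ρ) ∧
  ContinuousOn u'' s ∧
  (∀ ρ ∈ s, 0 < ρ →
    u'' ρ + (((n : ℝ) + 1) / ρ) * u' ρ + u ρ + (ρ / 2) * u' ρ
      + 2 * (n : ℝ) * (u ρ) ^ 2 + 2 * ρ * u ρ * u' ρ = 0) ∧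
  u 0 = α ∧ u' 0 = 0

end
open Topology in
open Set in
theorem stmt4 (n : ℕ) (hn : 3 ≤ n) (α τ : ℝ) (hα : 0 < α)
    (u u' u'' : ℝ → ℝ)
    (hsol : IsProfileSolOn n α u u' u'' (Set.Ico 0 τ))
    (ρ₀ : ℝ) (hρ₀ : ρ₀ ∈ Set.Ioo 0 τ)
    (hpos : ∀ ρ ∈ Set.Icc (0:ℝ) ρ₀, 0 ≤ u ρ) :
    ∀ ρ ∈ Set.Ioc (0:ℝ) ρ₀, u' ρ < 0 := by
  obtain ⟨hu, hu', hu''c, hODE, hu0, hu'0⟩ := hsol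
  obtain ⟨hρ₀pos, hρ₀τ⟩ := hρ₀
  -- basic continuity
  have hcu : ContinuousOn u (Ico 0 τ) := fun x hx => (hu x hx).continuousWithinAt
  have hcu' : ContinuousOn u' (Ico 0 τ) := fun x hx => (hu' x hx).continuousWithinAt
  have hIooIco : Ioo (0:ℝ) τ ⊆ Ico 0 τ := Ioo_subset_Ico_self
  -- upgrade to HasDerivAt on the interior
  have hnhds : ∀ x ∈ Ioo (0:ℝ) τ, Ico (0:ℝ) τ ∈ 𝓝 x := fun x hx =>
    mem_of_superset (isOpen_Ioo.mem_nhds hx) hIooIco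
  have huAt : ∀ x ∈ Ioo (0:ℝ) τ, HasDerivAt u (u' x) x := fun x hx =>
    (hu x (hIooIco hx)).hasDerivAt (hnhds x hx)
  have hu'At : ∀ x ∈ Ioo (0:ℝ) τ, HasDerivAt u' (u'' x) x := fun x hx =>
    (hu' x (hIooIco hx)).hasDerivAt (hnhds x hx)
  have hcuIoo : ContinuousOn u (Ioo 0 τ) := fun x hx => (huAt x hx).continuousAt.continuousWithinAt
  -- the integrating factor pieces
  set g : ℝ → ℝ := fun s => s * u s with hg
  have hcg : ContinuousOn g (Ico 0 τ) := continuousOn_id.mul hcu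
  set W : ℝ → ℝ := fun ρ => ∫ s in (0:ℝ)..ρ, g s with hW
  set P : ℝ → ℝ := fun ρ => ρ ^ (n+1) * Real.exp (ρ^2/4 + 2 * W ρ) with hP
  set f : ℝ → ℝ := fun ρ => u' ρ * P ρ with hf
  have hIccsub : Icc (0:ℝ) ρ₀ ⊆ Ico 0 τ := fun x hx => ⟨hx.1, lt_of_le_of_lt hx.2 hρ₀τ⟩
  -- W is continuous on Icc 0 ρ₀
  have hgint : IntegrableOn g (Icc 0 ρ₀) := (hcg.mono hIccsub).integrableOn_compact isCompact_Icc
  have hWc : ContinuousOn W (Icc 0 ρ₀) := by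
    have := intervalIntegral.continuousOn_primitive_interval (a := 0) (b := ρ₀) (f := g)
      (μ := volume) (by rwa [uIcc_of_le hρ₀pos.le])
    rwa [uIcc_of_le hρ₀pos.le] at this
  -- W has derivative g at interior points
  have hWd : ∀ x ∈ Ioo (0:ℝ) ρ₀, HasDerivAt W (g x) x := by
    intro x hx
    have hxτ : x ∈ Ioo (0:ℝ) τ := ⟨hx.1, hx.2.trans hρ₀τ⟩
    have hcgx : ContinuousAt g x := by
      have : ContinuousAt u x := (huAt x hxτ).continuousAt
      exact continuousAt_id.mul this
    have hmeas : StronglyMeasurableAtFilter g (𝓝 x) volume :=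
      ContinuousOn.stronglyMeasurableAtFilter isOpen_Ioo
        (continuousOn_id.mul hcuIoo) x hxτ
    have hint : IntervalIntegrable g volume 0 x := by
      apply ContinuousOn.intervalIntegrable
      rw [uIcc_of_le hx.1.le]
      exact hcg.mono (fun y hy => ⟨hy.1, lt_of_le_of_lt hy.2 hxτ.2⟩)
    exact intervalIntegral.integral_hasDerivAt_right hint hmeas hcgx
  -- P is positive for positive ρ
  have hPpos : ∀ x : ℝ, 0 < x → 0 < P x := fun x hx =>
    mul_pos (pow_pos hx _) (Real.exp_pos _)
  have hP0 : P 0 = 0 := by simp [hP]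
  -- continuity of f on Icc 0 ρ₀
  have hPc : ContinuousOn P (Icc 0 ρ₀) := by
    apply ContinuousOn.mul (continuousOn_pow _)
    exact (Real.continuous_exp.comp_continuousOn
      (((continuousOn_pow 2).div_const 4).add (continuousOn_const.mul hWc)))
  have hfc : ContinuousOn f (Icc 0 ρ₀) := (hcu'.mono hIccsub).mul hPc
  -- derivative of f at interior points
  have hfd : ∀ x ∈ Ioo (0:ℝ) ρ₀, HasDerivAt f (-(P x) * (u x + 2 * n * (u x)^2)) x := by
    intro x hx
    have hxτ : x ∈ Ioo (0:ℝ) τ := ⟨hx.1, hx.2.trans hρ₀τ⟩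
    have hxne : x ≠ 0 := ne_of_gt hx.1
    set E : ℝ := Real.exp (x^2/4 + 2 * W x) with hE
    have hEd : HasDerivAt (fun ρ => Real.exp (ρ^2/4 + 2 * W ρ)) (E * (x/2 + 2 * (x * u x))) x := by
      have h1 : HasDerivAt (fun ρ : ℝ => ρ^2/4 + 2 * W ρ) (x/2 + 2 * (x * u x)) x := by
        have h2 : HasDerivAt (fun ρ : ℝ => ρ^2/4) (x/2) x := by
          have := (hasDerivAt_pow 2 x).div_const 4
          exact this.congr_deriv (by ring)
        exact h2.add ((hWd x hx).const_mul 2)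
      exact (Real.hasDerivAt_exp _).comp x h1
    have hPd : HasDerivAt P ((↑(n+1) : ℝ) * x ^ n * E + x ^ (n+1) * (E * (x/2 + 2 * (x * u x)))) x :=
      (hasDerivAt_pow (n+1) x).mul hEd
    have hfd' : HasDerivAt f (u'' x * P x +
        u' x * ((↑(n+1) : ℝ) * x ^ n * E + x ^ (n+1) * (E * (x/2 + 2 * (x * u x))))) x :=
      (hu'At x hxτ).mul hPd
    convert hfd' using 1
    have hode := hODE x (hIooIco hxτ) hx.1
    have hPx : P x = x ^ (n+1) * E := rfl
    have hpow : x ^ (n+1) = x * x ^ n := by ring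
    rw [hPx, hpow]
    have hode' : x * u'' x + ((n:ℝ) + 1) * u' x + x * u x + x * (x / 2) * u' x
        + x * (2 * (n:ℝ) * (u x) ^ 2) + x * (2 * x * u x * u' x) = 0 := by
      field_simp at hode
      linarith [hode]
    push_cast
    linear_combination (-(x^n * E)) * hode'
  -- nonpositivity of the derivative, strict near 0
  have hderiv_nonpos : ∀ x ∈ Ioo (0:ℝ) ρ₀, deriv f x ≤ 0 := by
    intro x hx
    rw [(hfd x hx).deriv]
    have h1 : 0 ≤ u x := hpos x ⟨hx.1.le, hx.2.le⟩
    have h2 : 0 < P x := hPpos x hx.1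
    have h3 : 0 ≤ u x + 2 * n * (u x)^2 := by positivity
    nlinarith [mul_nonneg h2.le h3]
  have hanti : AntitoneOn f (Icc 0 ρ₀) := by
    apply antitoneOn_of_deriv_nonpos (convex_Icc _ _) hfc
    · rw [interior_Icc]
      exact fun x hx => (hfd x hx).differentiableAt.differentiableWithinAt
    · rw [interior_Icc]
      exact hderiv_nonpos
  -- u > 0 near 0
  have hupos0 : ∀ᶠ x in 𝓝[Ico 0 τ] 0, 0 < u x := by
    have : ContinuousWithinAt u (Ico 0 τ) 0 := hcu 0 ⟨le_refl 0, hρ₀pos.trans hρ₀τ⟩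
    have h := this.eventually_const_lt (by rw [hu0]; exact hα : (0:ℝ) < u 0)
    exact h
  obtain ⟨ε, hε, hball⟩ := Metric.mem_nhdsWithin_iff.mp hupos0
  set δ : ℝ := min (ε/2) ρ₀ with hδ
  have hδpos : 0 < δ := lt_min (by linarith) hρ₀pos
  have hδρ₀ : δ ≤ ρ₀ := min_le_right _ _
  have huδ : ∀ x ∈ Icc (0:ℝ) δ, 0 < u x := by
    intro x hx
    have hmem : x ∈ Metric.ball (0:ℝ) ε ∩ Ico 0 τ := by
      constructor
      · rw [Metric.mem_ball, Real.dist_eq, sub_zero, abs_of_nonneg hx.1]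
        calc x ≤ δ := hx.2
          _ ≤ ε/2 := min_le_left _ _
          _ < ε := by linarith
      · exact hIccsub ⟨hx.1, hx.2.trans hδρ₀⟩
    exact hball hmem
  -- strict decrease on [0, δ]
  have hstrict : StrictAntiOn f (Icc 0 δ) := by
    apply strictAntiOn_of_deriv_neg (convex_Icc _ _)
      (hfc.mono (Icc_subset_Icc le_rfl hδρ₀))
    rw [interior_Icc]
    intro x hx
    have hx' : x ∈ Ioo (0:ℝ) ρ₀ := ⟨hx.1, lt_of_lt_of_le hx.2 hδρ₀⟩
    rw [(hfd x hx').deriv]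
    have h1 : 0 < u x := huδ x ⟨hx.1.le, hx.2.le⟩
    have h2 : 0 < P x := hPpos x hx.1
    have h3 : 0 < u x + 2 * n * (u x)^2 := by positivity
    nlinarith [mul_pos h2 h3]
  have hf0 : f 0 = 0 := by simp [hf, hu'0, hP0]
  -- conclude
  intro ρ hρ
  have hfneg : f ρ < 0 := by
    rcases le_or_gt ρ δ with h | h
    · have := hstrict (left_mem_Icc.mpr hδpos.le) ⟨hρ.1.le, h⟩ hρ.1
      rwa [hf0] at this
    · have h1 : f δ < 0 := by
        have := hstrict (left_mem_Icc.mpr hδpos.le) (right_mem_Icc.mpr hδpos.le) hδpos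
        rwa [hf0] at this
      have h2 : f ρ ≤ f δ := hanti ⟨hδpos.le, hδρ₀⟩ ⟨hρ.1.le, hρ.2⟩ h.le
      linarith
  have hPρ : 0 < P ρ := hPpos ρ hρ.1
  by_contra hcon
  push_neg at hcon
  have : 0 ≤ f ρ := mul_nonneg hcon hPρ.le
  linarith
end

section
/- Fix an integer n ≥ 3 and α > 0, let u be the global solution of the profile ODE with parameter α, and let ℓ_α := lim_{ρ→∞} ρ²·u(ρ) (which exists and lies in (0,2]). Then lim_{ρ→∞} ρ³·u'(ρ) = −2ℓ_α. -/
open Set MeasureTheory Filter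

open Set Filter MeasureTheory in
private lemma stolz (F G F' G' : ℝ → ℝ) (a L : ℝ)
    (hF : ∀ ρ ∈ Set.Ici a, HasDerivAt F (F' ρ) ρ)
    (hG : ∀ ρ ∈ Set.Ici a, HasDerivAt G (G' ρ) ρ)
    (hFc : ContinuousOn F' (Set.Ici a))
    (hGc : ContinuousOn G' (Set.Ici a))
    (hG'pos : ∀ ρ ∈ Set.Ici a, 0 < G' ρ)
    (hGtop : Tendsto G atTop atTop)
    (hrat : Tendsto (fun ρ => F' ρ / G' ρ) atTop (nhds L)) :
    Tendsto (fun ρ => F ρ / G ρ) atTop (nhds L) := by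
  rw [Metric.tendsto_nhds]
  intro ε hε
  have hε2 : 0 < ε / 2 := by positivity
  have h1 : ∀ᶠ ρ in atTop, |F' ρ / G' ρ - L| < ε / 2 := by
    have := hrat.eventually (Metric.ball_mem_nhds L hε2)
    filter_upwards [this] with x hx
    simpa [Real.dist_eq] using hx
  obtain ⟨b₀, hb₀⟩ := eventually_atTop.mp h1
  set b := max b₀ a with hbdef
  have hba : a ≤ b := le_max_right _ _
  have key : ∀ x, b ≤ x → |F' x - L * G' x| ≤ ε / 2 * G' x := by
    intro x hx
    have hxa : a ≤ x := le_trans hba hx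
    have hg := hG'pos x hxa
    have h2 : |F' x / G' x - L| ≤ ε / 2 := (hb₀ x (le_trans (le_max_left _ _) hx)).le
    have heq : F' x - L * G' x = (F' x / G' x - L) * G' x := by
      field_simp
    rw [heq, abs_mul, abs_of_pos hg]
    exact mul_le_mul_of_nonneg_right h2 hg.le
  -- integral bound for ρ ≥ b
  have main : ∀ ρ, b ≤ ρ → |(F ρ - F b) - L * (G ρ - G b)| ≤ ε / 2 * (G ρ - G b) := by
    intro ρ hρ
    have hsub : Set.uIcc b ρ ⊆ Set.Ici a := by
      rw [Set.uIcc_of_le hρ]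
      exact fun x hx => le_trans hba hx.1
    have intF : IntervalIntegrable F' volume b ρ := (hFc.mono hsub).intervalIntegrable
    have intG : IntervalIntegrable G' volume b ρ := (hGc.mono hsub).intervalIntegrable
    have hFTC : ∫ x in b..ρ, F' x = F ρ - F b :=
      intervalIntegral.integral_eq_sub_of_hasDerivAt (fun x hx => hF x (hsub hx)) intF
    have hGTC : ∫ x in b..ρ, G' x = G ρ - G b :=
      intervalIntegral.integral_eq_sub_of_hasDerivAt (fun x hx => hG x (hsub hx)) intG
    have intFLG : IntervalIntegrable (fun x => F' x - L * G' x) volume b ρ :=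
      intF.sub (intG.const_mul L)
    have intEG : IntervalIntegrable (fun x => ε / 2 * G' x) volume b ρ := intG.const_mul _
    have intnEG : IntervalIntegrable (fun x => -(ε / 2 * G' x)) volume b ρ := intEG.neg
    have hup : ∫ x in b..ρ, (F' x - L * G' x) ≤ ∫ x in b..ρ, ε / 2 * G' x := by
      apply intervalIntegral.integral_mono_on hρ intFLG intEG
      intro x hx
      have := key x hx.1
      have := abs_le.mp this
      linarith [this.2]
    have hlo : ∫ x in b..ρ, -(ε / 2 * G' x) ≤ ∫ x in b..ρ, (F' x - L * G' x) := by
      apply intervalIntegral.integral_mono_on hρ intnEG intFLG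
      intro x hx
      have := abs_le.mp (key x hx.1)
      linarith [this.1]
    have e1 : ∫ x in b..ρ, (F' x - L * G' x) = (F ρ - F b) - L * (G ρ - G b) := by
      rw [intervalIntegral.integral_sub intF (intG.const_mul L),
        intervalIntegral.integral_const_mul, hFTC, hGTC]
    have e2 : ∫ x in b..ρ, ε / 2 * G' x = ε / 2 * (G ρ - G b) := by
      rw [intervalIntegral.integral_const_mul, hGTC]
    have e3 : ∫ x in b..ρ, -(ε / 2 * G' x) = -(ε / 2 * (G ρ - G b)) := by
      rw [intervalIntegral.integral_neg, e2]
    rw [abs_le]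
    constructor
    · rw [← e1, ← e3] at *; linarith [hlo]
    · rw [← e1, ← e2] at *; linarith [hup]
  set C := |F b - L * G b| + ε / 2 * |G b| with hCdef
  have hC0 : 0 ≤ C := by positivity
  clear_value C
  have hev2 : ∀ᶠ ρ in atTop, (2 * C + 2) / ε ≤ G ρ := hGtop.eventually_ge_atTop _
  filter_upwards [hev2, eventually_ge_atTop b] with ρ hGρ hρb
  have hGρpos : 0 < G ρ := by
    have : 0 < (2 * C + 2) / ε := by positivity
    linarith
  have hCsmall : C < ε / 2 * G ρ := by
    have h4 : 2 * C + 2 ≤ G ρ * ε := (div_le_iff₀ hε).mp hGρ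
    nlinarith
  have h3 := main ρ hρb
  have habs := abs_le.mp h3
  have hdecomp : F ρ - L * G ρ = (F b - L * G b) + ((F ρ - F b) - L * (G ρ - G b)) := by ring
  have hbound : |F ρ - L * G ρ| ≤ C + ε / 2 * G ρ := by
    rw [hdecomp]
    refine le_trans (abs_add_le _ _) ?_
    have h5 : |(F ρ - F b) - L * (G ρ - G b)| ≤ ε / 2 * (G ρ - G b) := h3
    have h6 : ε / 2 * (G ρ - G b) ≤ ε / 2 * G ρ + ε / 2 * |G b| := by
      nlinarith [neg_abs_le (G b), abs_nonneg (G b)]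
    rw [hCdef]
    have h7 : |F ρ - F b - L * (G ρ - G b)| ≤ ε / 2 * (G ρ - G b) := h5
    linarith
  have heqd : F ρ / G ρ - L = (F ρ - L * G ρ) / G ρ := by
    field_simp
  rw [Real.dist_eq, heqd, abs_div, abs_of_pos hGρpos, div_lt_iff₀ hGρpos]
  calc |F ρ - L * G ρ| ≤ C + ε / 2 * G ρ := hbound
    _ < ε / 2 * G ρ + ε / 2 * G ρ := by linarith
    _ = ε * G ρ := by ring


open Set Filter in
theorem stmt7 (n : ℕ) (hn : 3 ≤ n) (α : ℝ) (hα : 0 < α)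
    (u u' u'' : ℝ → ℝ) (hsol : IsProfileSolOn n α u u' u'' (Set.Ici 0))
    (ℓ : ℝ) (hℓmem : ℓ ∈ Set.Ioc (0:ℝ) 2)
    (hℓ : Tendsto (fun ρ : ℝ => ρ ^ 2 * u ρ) atTop (nhds ℓ)) :
    Tendsto (fun ρ : ℝ => ρ ^ 3 * u' ρ) atTop (nhds (-2 * ℓ)) := by
  obtain ⟨hu, hu', hcont'', hode, hu0, hu'0⟩ := hsol
  obtain ⟨hℓpos, hℓle⟩ := hℓmem
  have hn3 : (3:ℝ) ≤ (n:ℝ) := by exact_mod_cast hn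
  have uD : ∀ ρ : ℝ, 0 < ρ → HasDerivAt u (u' ρ) ρ :=
    fun ρ hρ => (hu ρ hρ.le).hasDerivAt (Ici_mem_nhds hρ)
  have u'D : ∀ ρ : ℝ, 0 < ρ → HasDerivAt u' (u'' ρ) ρ :=
    fun ρ hρ => (hu' ρ hρ.le).hasDerivAt (Ici_mem_nhds hρ)
  have ucont : ContinuousOn u (Ioi 0) :=
    fun x hx => ((uD x hx).continuousAt).continuousWithinAt
  have u'cont : ContinuousOn u' (Ioi 0) :=
    fun x hx => ((u'D x hx).continuousAt).continuousWithinAt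
  have hev : ∀ᶠ ρ in atTop, ℓ/2 < ρ^2 * u ρ := hℓ.eventually (eventually_gt_nhds (by linarith))
  obtain ⟨a₀, ha₀⟩ := eventually_atTop.mp hev
  set a := max a₀ 1 with hadef
  have ha1 : (1:ℝ) ≤ a := le_max_right _ _
  have hapos : (0:ℝ) < a := lt_of_lt_of_le one_pos ha1
  have hau : ∀ ρ, a ≤ ρ → ℓ/2 < ρ^2 * u ρ := fun ρ hρ => ha₀ ρ (le_trans (le_max_left _ _) hρ)
  have hupos : ∀ ρ, a ≤ ρ → 0 < u ρ := by
    intro ρ hρ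
    have hρpos : 0 < ρ := lt_of_lt_of_le hapos hρ
    have h1 : 0 < ρ^2 * u ρ := lt_trans (by positivity) (hau ρ hρ)
    nlinarith [sq_nonneg ρ]
  -- the integrating factor
  set g : ℝ → ℝ := fun s => 2 * s * u s with hgdef
  have gcont : ContinuousOn g (Ioi (0:ℝ)) := (continuousOn_const.mul continuousOn_id).mul ucont
  set I : ℝ → ℝ := fun ρ => ∫ s in a..ρ, g s with hIdef
  have ID : ∀ ρ, a ≤ ρ → HasDerivAt I (g ρ) ρ := by
    intro ρ hρ
    have hρpos : 0 < ρ := lt_of_lt_of_le hapos hρ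
    have hsub : uIcc a ρ ⊆ Ioi (0:ℝ) := by
      rw [uIcc_of_le hρ]; exact fun x hx => lt_of_lt_of_le hapos hx.1
    exact intervalIntegral.integral_hasDerivAt_right
      ((gcont.mono hsub).intervalIntegrable)
      (gcont.stronglyMeasurableAtFilter isOpen_Ioi ρ hρpos)
      (gcont.continuousAt (Ioi_mem_nhds hρpos))
  set Q : ℝ → ℝ := fun ρ => ρ^2/4 + I ρ with hQdef
  have QD : ∀ ρ, a ≤ ρ → HasDerivAt Q (ρ/2 + 2*ρ*u ρ) ρ := by
    intro ρ hρ
    have h1 : HasDerivAt (fun x : ℝ => x^2/4) (ρ/2) ρ := by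
      have := (hasDerivAt_pow 2 ρ).div_const 4
      simpa using this.congr_deriv (by ring)
    exact h1.add (ID ρ hρ)
  have Qcont : ContinuousOn Q (Ici a) := fun x hx => ((QD x hx).continuousAt).continuousWithinAt
  set F : ℝ → ℝ := fun ρ => ρ^(n+1) * Real.exp (Q ρ) * u' ρ with hFdef
  set F' : ℝ → ℝ := fun ρ => ρ^(n+1) * Real.exp (Q ρ) * (-(u ρ) - 2*(n:ℝ)*(u ρ)^2) with hF'def
  set G : ℝ → ℝ := fun ρ => ρ^(n-2) * Real.exp (Q ρ) with hGdef
  set G' : ℝ → ℝ := fun ρ => ((n:ℝ)-2) * ρ^(n-3) * Real.exp (Q ρ)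
    + ρ^(n-2) * Real.exp (Q ρ) * (ρ/2 + 2*ρ*u ρ) with hG'def
  have hEQ : ∀ ρ, a ≤ ρ → HasDerivAt (fun x => Real.exp (Q x)) (Real.exp (Q ρ) * (ρ/2 + 2*ρ*u ρ)) ρ :=
    fun ρ hρ => (QD ρ hρ).exp
  have FD : ∀ ρ ∈ Ici a, HasDerivAt F (F' ρ) ρ := by
    intro ρ hρ
    rw [mem_Ici] at hρ
    have hρpos : 0 < ρ := lt_of_lt_of_le hapos hρ
    have hρne : ρ ≠ 0 := ne_of_gt hρpos
    have hpow : HasDerivAt (fun x : ℝ => x^(n+1)) (((n:ℝ)+1)*ρ^n) ρ := by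
      simpa using hasDerivAt_pow (n+1) ρ
    have h := (hpow.mul (hEQ ρ hρ)).mul (u'D ρ hρpos)
    refine h.congr_deriv (Eq.symm ?_)
    have hode' := hode ρ (le_trans hapos.le hρ) hρpos
    have hu'' : u'' ρ = -((((n:ℝ)+1)/ρ) * u' ρ) - u ρ - (ρ/2) * u' ρ
        - 2*(n:ℝ)*(u ρ)^2 - 2*ρ*(u ρ)*(u' ρ) := by linarith
    rw [hF'def]
    simp only [Pi.mul_apply]
    rw [hu'', pow_succ]
    field_simp
    ring
  have GD : ∀ ρ ∈ Ici a, HasDerivAt G (G' ρ) ρ := by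
    intro ρ hρ
    rw [mem_Ici] at hρ
    have hpow : HasDerivAt (fun x : ℝ => x^(n-2)) (((n:ℝ)-2)*ρ^(n-3)) ρ := by
      have h0 := hasDerivAt_pow (n-2) ρ
      have e1 : n - 2 - 1 = n - 3 := by omega
      rw [e1, Nat.cast_sub (by omega)] at h0
      simpa using h0
    have h := hpow.mul (hEQ ρ hρ)
    refine h.congr_deriv (Eq.symm ?_)
    rw [hG'def]
    simp only
    ring
  have usub : Ici a ⊆ Ioi (0:ℝ) := fun x hx => lt_of_lt_of_le hapos hx
  have ucontA : ContinuousOn u (Ici a) := ucont.mono usub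
  have hG'pos : ∀ ρ ∈ Ici a, 0 < G' ρ := by
    intro ρ hρ
    rw [mem_Ici] at hρ
    have hρpos : 0 < ρ := lt_of_lt_of_le hapos hρ
    have he : 0 < Real.exp (Q ρ) := Real.exp_pos _
    have hu1 : 0 < u ρ := hupos ρ hρ
    have h1 : 0 < ((n:ℝ)-2) * ρ^(n-3) * Real.exp (Q ρ) := by
      apply mul_pos (mul_pos (by linarith) (pow_pos hρpos _)) he
    have h2 : 0 < ρ^(n-2) * Real.exp (Q ρ) * (ρ/2 + 2*ρ*u ρ) := by
      apply mul_pos (mul_pos (pow_pos hρpos _) he)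
      have : 0 < 2*ρ*u ρ := by positivity
      linarith
    rw [hG'def]
    simp only
    linarith
  have expcont : ContinuousOn (fun ρ => Real.exp (Q ρ)) (Ici a) :=
    Real.continuous_exp.comp_continuousOn Qcont
  have F'cont : ContinuousOn F' (Ici a) := by
    rw [hF'def]
    exact ((continuous_pow (n+1)).continuousOn.mul expcont).mul
      ((ucontA.neg).sub (continuousOn_const.mul (ucontA.pow 2)))
  have G'cont : ContinuousOn G' (Ici a) := by
    rw [hG'def]
    refine ContinuousOn.add
      ((continuousOn_const.mul (continuous_pow (n-3)).continuousOn).mul expcont)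
      (((continuous_pow (n-2)).continuousOn.mul expcont).mul ?_)
    exact (continuousOn_id.div_const 2).add
      ((continuousOn_const.mul continuousOn_id).mul ucontA)
  have hGtop : Tendsto G atTop atTop := by
    apply tendsto_atTop_mono' atTop (_ : ∀ᶠ ρ in atTop, id ρ ≤ G ρ) tendsto_id
    filter_upwards [eventually_ge_atTop a] with ρ hρ
    have hρ1 : (1:ℝ) ≤ ρ := le_trans ha1 hρ
    have hI0 : 0 ≤ I ρ := by
      rw [hIdef]
      apply intervalIntegral.integral_nonneg hρ
      intro x hx
      have hx0 : 0 < x := lt_of_lt_of_le hapos hx.1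
      have := hupos x hx.1
      rw [hgdef]
      positivity
    have hQ0 : 0 ≤ Q ρ := by
      rw [hQdef]; simp only; positivity
    have h1 : (1:ℝ) ≤ Real.exp (Q ρ) := Real.one_le_exp hQ0
    have h2 : ρ ≤ ρ^(n-2) := by
      calc ρ = ρ^1 := (pow_one ρ).symm
        _ ≤ ρ^(n-2) := pow_le_pow_right₀ hρ1 (by omega)
    have h3 : 0 < ρ^(n-2) := pow_pos (by linarith) _
    rw [hGdef]
    simp only [id]
    nlinarith
  have hpow2top : Tendsto (fun ρ : ℝ => ρ^2) atTop atTop := tendsto_pow_atTop two_ne_zero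
  have hrat : Tendsto (fun ρ => F' ρ / G' ρ) atTop (nhds (-2*ℓ)) := by
    have hv2 : Tendsto (fun ρ : ℝ => (ρ^2*u ρ)^2 / ρ^2) atTop (nhds 0) :=
      Tendsto.div_atTop (hℓ.pow 2) hpow2top
    have hv1 : Tendsto (fun ρ : ℝ => (ρ^2*u ρ) / ρ^2) atTop (nhds 0) :=
      Tendsto.div_atTop hℓ hpow2top
    have hc1 : Tendsto (fun ρ : ℝ => ((n:ℝ)-2) / ρ^2) atTop (nhds 0) :=
      Tendsto.div_atTop tendsto_const_nhds hpow2top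
    have hnum : Tendsto (fun ρ : ℝ => -(ρ^2*u ρ) - 2*(n:ℝ)*((ρ^2*u ρ)^2/ρ^2)) atTop
        (nhds (-ℓ - 2*(n:ℝ)*0)) := (hℓ.neg).sub (tendsto_const_nhds.mul hv2)
    have hden : Tendsto (fun ρ : ℝ => ((n:ℝ)-2)/ρ^2 + 1/2 + 2*((ρ^2*u ρ)/ρ^2)) atTop
        (nhds (0 + 1/2 + 2*0)) := (hc1.add tendsto_const_nhds).add (tendsto_const_nhds.mul hv1)
    have hlim := hnum.div hden (by norm_num)
    have hval : (-ℓ - 2*(n:ℝ)*0) / (0 + 1/2 + 2*0) = -2*ℓ := by norm_num; ring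
    rw [hval] at hlim
    apply hlim.congr'
    filter_upwards [eventually_ge_atTop a] with ρ hρ
    have hρpos : 0 < ρ := lt_of_lt_of_le hapos hρ
    have hρne : ρ ≠ 0 := ne_of_gt hρpos
    have hEne : Real.exp (Q ρ) ≠ 0 := (Real.exp_pos _).ne'
    have hG'ne : G' ρ ≠ 0 := (hG'pos ρ hρ).ne'
    have hu1 : 0 < u ρ := hupos ρ hρ
    simp only [Pi.div_apply]
    have e2 : (ρ^2*u ρ)/ρ^2 = u ρ := by field_simp
    have e1 : (ρ^2*u ρ)^2/ρ^2 = ρ^2*(u ρ)^2 := by field_simp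
    rw [e1, e2]
    have hden2 : ((n:ℝ)-2)/ρ^2 + 1/2 + 2*(u ρ) = (((n:ℝ)-2) + ρ^2/2 + 2*ρ^2*u ρ)/ρ^2 := by
      field_simp
    rw [hden2, div_div_eq_mul_div]
    have hD2ne : ((n:ℝ)-2) + ρ^2/2 + 2*ρ^2*u ρ ≠ 0 := by
      have t1 : 0 < ρ^2 := by positivity
      nlinarith
    rw [div_eq_div_iff hD2ne hG'ne]
    rw [hF'def, hG'def]
    simp only
    rw [show (ρ:ℝ)^(n-2) = ρ^(n-3)*ρ from by rw [← pow_succ]; congr 1; omega]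
    rw [show (ρ:ℝ)^(n+1) = ρ^(n-3)*ρ^4 from by rw [← pow_add]; congr 1; omega]
    ring
  have hFG := stolz F G F' G' a (-2*ℓ) FD GD F'cont G'cont hG'pos hGtop hrat
  apply hFG.congr'
  filter_upwards [eventually_ge_atTop a] with ρ hρ
  have hρpos : 0 < ρ := lt_of_lt_of_le hapos hρ
  have hρne : ρ ≠ 0 := ne_of_gt hρpos
  have hEne : Real.exp (Q ρ) ≠ 0 := (Real.exp_pos _).ne'
  rw [hFdef, hGdef]
  simp only
  rw [show n+1 = (n-2)+3 from by omega, pow_add]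
  rw [show ρ^(n-2)*ρ^3 * Real.exp (Q ρ) * u' ρ = (ρ^3*u' ρ)*(ρ^(n-2)*Real.exp (Q ρ)) from by ring,
    mul_div_assoc, div_self (by positivity), mul_one]
end

section
/- Let z ∈ C²(ℝ) solve the Emden-type ODE with n = 3, i.e. z̈(t) = (1−2z(t))·ż(t) + 2(z(t)−z(t)²) for all t ∈ ℝ. Suppose z and ż are bounded on ℝ and ż(t) + z(t) > 0 for every t ∈ ℝ. Then it is impossible that limsup_{t→∞} z(t) < 1. -/
open Set Filter

noncomputable section

/-- The Emden-type ODE `z̈ + (n−4+2z)·ż − 2(n−2)·(z−z²) = 0` on all of `ℝ`. -/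
def EmdenODE (n : ℕ) (z : ℝ → ℝ) : Prop :=
  ∀ t : ℝ, deriv (deriv z) t + ((n : ℝ) - 4 + 2 * z t) * deriv z t
    - 2 * ((n : ℝ) - 2) * (z t - (z t) ^ 2) = 0

theorem stmt16 (z : ℝ → ℝ) (hz : ContDiff ℝ 2 z)
    (hode : ∀ t : ℝ, deriv (deriv z) t
      = (1 - 2 * z t) * deriv z t + 2 * (z t - (z t) ^ 2))
    (C : ℝ) (hbd : ∀ t : ℝ, |z t| ≤ C ∧ |deriv z t| ≤ C)
    (hζ : ∀ t : ℝ, 0 < deriv z t + z t) :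
    ¬ (Filter.limsup z Filter.atTop < 1) := by
  intro hlim
  -- differentiability facts
  have h2 := contDiff_succ_iff_deriv.mp (show ContDiff ℝ (1 + 1) z by exact_mod_cast hz)
  have hdz : Differentiable ℝ z := h2.1
  have hddz : Differentiable ℝ (deriv z) := h2.2.2.differentiable one_ne_zero
  -- eventual bound z < b < 1
  have hbdd : Filter.IsBoundedUnder (· ≤ ·) atTop z :=
    Filter.isBoundedUnder_of ⟨C, fun t => (abs_le.mp (hbd t).1).2⟩
  set b : ℝ := (Filter.limsup z Filter.atTop + 1) / 2 with hbdef
  have hlb : Filter.limsup z Filter.atTop < b := by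
    rw [hbdef]; linarith
  have hb1 : b < 1 := by rw [hbdef]; linarith
  have hev : ∀ᶠ t in atTop, z t < b := Filter.eventually_lt_of_limsup_lt hlb hbdd
  obtain ⟨T, hT⟩ := Filter.eventually_atTop.mp hev
  set ε : ℝ := 1 - b with hεdef
  have hε : 0 < ε := by linarith
  set g : ℝ → ℝ := fun t => (deriv z t + z t) * Real.exp (-(2 * ε) * t) with hgdef
  have hg : ∀ t : ℝ, HasDerivAt g
      ((deriv (deriv z) t + deriv z t) * Real.exp (-(2 * ε) * t)
        + (deriv z t + z t) * (Real.exp (-(2 * ε) * t) * (-(2 * ε) * 1))) t := by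
    intro t
    have h1 : HasDerivAt (fun s => deriv z s + z s)
        (deriv (deriv z) t + deriv z t) t :=
      ((hddz t).hasDerivAt).add ((hdz t).hasDerivAt)
    have h3 : HasDerivAt (fun s => Real.exp (-(2 * ε) * s))
        (Real.exp (-(2 * ε) * t) * (-(2 * ε) * 1)) t :=
      ((hasDerivAt_id t).const_mul (-(2 * ε))).exp
    exact h1.mul h3
  have hgd : Differentiable ℝ g := fun t => (hg t).differentiableAt
  have hderiv_nonneg : ∀ t, T ≤ t → 0 ≤ deriv g t := by
    intro t ht
    rw [(hg t).deriv, hode t]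
    have hE : 0 < Real.exp (-(2 * ε) * t) := Real.exp_pos _
    have hzb : z t < b := hT t ht
    have hzp := hζ t
    nlinarith [mul_pos hzp hE]
  have hmono : MonotoneOn g (Set.Ici T) := by
    apply monotoneOn_of_deriv_nonneg (convex_Ici T) hgd.continuous.continuousOn
      (hgd.differentiableOn)
    intro t ht
    exact hderiv_nonneg t (le_of_lt (by simpa using ht))
  have hgT : 0 < g T := mul_pos (hζ T) (Real.exp_pos _)
  -- ζ t ≥ g T * exp (2 ε t) for t ≥ T
  have key : ∀ t, T ≤ t → g T * Real.exp (2 * ε * t) ≤ deriv z t + z t := by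
    intro t ht
    have h1 : g T ≤ g t := hmono (Set.self_mem_Ici) (by exact ht) ht
    have hE : 0 < Real.exp (2 * ε * t) := Real.exp_pos _
    have := mul_le_mul_of_nonneg_right h1 hE.le
    have heq : g t * Real.exp (2 * ε * t) = deriv z t + z t := by
      rw [hgdef]
      simp only
      rw [mul_assoc, ← Real.exp_add]
      ring_nf
      simp
    linarith [this, heq ▸ this]
  -- tendsto to infinity
  have htend : Filter.Tendsto (fun t => g T * Real.exp (2 * ε * t)) atTop atTop := by
    apply Filter.Tendsto.const_mul_atTop hgT
    exact Real.tendsto_exp_atTop.comp (Filter.tendsto_atTop_atTop_of_monotone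
      (fun a b hab => by nlinarith) (fun x => ⟨x / (2 * ε), by field_simp; exact le_rfl⟩))
  have hev2 : ∀ᶠ t in atTop, 2 * C < g T * Real.exp (2 * ε * t) :=
    htend.eventually_gt_atTop (2 * C)
  obtain ⟨t, ht1, ht2⟩ := (hev2.and (Filter.eventually_ge_atTop T)).exists
  have hζle : deriv z t + z t ≤ 2 * C := by
    have h1 := (abs_le.mp (hbd t).1).2
    have h2 := (abs_le.mp (hbd t).2).2
    linarith
  have := key t ht2
  linarith

end
end

section
/- Let z ∈ C²(ℝ) solve the Emden-type ODE with n = 3, i.e. z̈(t) = (1−2z(t))·ż(t) + 2(z(t)−z(t)²) for all t ∈ ℝ, and suppose ż(t) + z(t) > 0 for every t ∈ ℝ. If there exist two distinct times τ₀ ≠ τ₁ with z(τ₀) = z(τ₁) and ż(τ₀) = ż(τ₁), then z(t) = 1 and ż(t) = 0 for every t ∈ ℝ. -/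
open Set Filter

noncomputable section

lemma emden_prop (z : ℝ → ℝ) (hz1 : Differentiable ℝ z) (hz2 : Differentiable ℝ (deriv z))
    (hode : ∀ t : ℝ, deriv (deriv z) t
      = (1 - 2 * z t) * deriv z t + 2 * (z t - (z t) ^ 2))
    (a : ℝ) (ha : z a = 1) (ha' : deriv z a = 0) (t : ℝ) :
    (z t - 1) ^ 2 + (deriv z t) ^ 2 = 0 := by
  set E : ℝ → ℝ := fun x => (z x - 1) ^ 2 + (deriv z x) ^ 2 with hEdef
  have hEa : E a = 0 := by simp [hEdef, ha, ha']
  have hE0 : ∀ x, 0 ≤ E x := fun x => by positivity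
  set D : ℝ → ℝ := fun x => 2 * (z x - 1) * deriv z x
      + 2 * deriv z x * ((1 - 2 * z x) * deriv z x + 2 * (z x - (z x) ^ 2)) with hDdef
  have hED : ∀ x, HasDerivAt E (D x) x := by
    intro x
    have h1 : HasDerivAt (fun y => (z y - 1) ^ 2) (2 * (z x - 1) * deriv z x) x := by
      have := (((hz1 x).hasDerivAt).sub_const 1).pow 2
      exact this.congr_deriv (by ring)
    have h2 : HasDerivAt (fun y => (deriv z y) ^ 2)
        (2 * deriv z x * ((1 - 2 * z x) * deriv z x + 2 * (z x - (z x) ^ 2))) x := by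
      have := ((hz2 x).hasDerivAt).pow 2
      rw [hode x] at this
      exact this.congr_deriv (by ring)
    exact h1.add h2
  rcases le_total a t with hat | hat
  · -- forward in time
    obtain ⟨M, hM⟩ := isCompact_Icc.exists_bound_of_continuousOn
      (s := Icc a t) hz1.continuous.continuousOn
    set M' : ℝ := max M 0 with hM'def
    have hM'0 : 0 ≤ M' := le_max_right _ _
    have hMx : ∀ x ∈ Icc a t, |z x| ≤ M' := fun x hx => by
      have := hM x hx; rw [Real.norm_eq_abs] at this; exact this.trans (le_max_left _ _)
    set K : ℝ := 3 + 6 * M' with hKdef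
    set G : ℝ → ℝ := fun x => E x * Real.exp (-(K * x)) with hGdef
    have hGD : ∀ x, HasDerivAt G ((D x - K * E x) * Real.exp (-(K * x))) x := by
      intro x
      have he : HasDerivAt (fun y => Real.exp (-(K * y))) (Real.exp (-(K * x)) * (-(K * 1))) x :=
        (((hasDerivAt_id x).const_mul K).neg).exp
      have := (hED x).mul he
      exact this.congr_deriv (by ring)
    have hanti : AntitoneOn G (Icc a t) := by
      apply antitoneOn_of_deriv_nonpos (convex_Icc a t)
      · exact (Continuous.continuousOn (by
          have : Differentiable ℝ G := fun x => (hGD x).differentiableAt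
          exact this.continuous))
      · exact fun x _ => (hGD x).differentiableAt.differentiableWithinAt
      · intro x hx
        rw [interior_Icc] at hx
        rw [(hGD x).deriv]
        have hxI : x ∈ Icc a t := Ioo_subset_Icc_self hx
        have hc := abs_le.mp (hMx x hxI)
        have hDK : D x ≤ K * E x := by
          simp only [hDdef, hEdef, hKdef]
          nlinarith [sq_nonneg (z x - 1 - deriv z x), sq_nonneg (z x - 1 + deriv z x),
            mul_nonneg (by linarith : (0:ℝ) ≤ M' - z x) (sq_nonneg (z x - 1 + deriv z x)),
            mul_nonneg (by linarith : (0:ℝ) ≤ M' - z x) (sq_nonneg (z x - 1 - deriv z x)),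
            mul_nonneg (by linarith : (0:ℝ) ≤ M' + z x) (sq_nonneg (z x - 1 + deriv z x)),
            mul_nonneg (by linarith : (0:ℝ) ≤ M' + z x) (sq_nonneg (z x - 1 - deriv z x)),
            mul_nonneg (by linarith : (0:ℝ) ≤ M' - z x) (sq_nonneg (deriv z x)),
            mul_nonneg (by linarith : (0:ℝ) ≤ M' + z x) (sq_nonneg (deriv z x)),
            mul_nonneg hM'0 (sq_nonneg (z x - 1))]
        exact mul_nonpos_of_nonpos_of_nonneg (by linarith) (Real.exp_pos _).le
    have hGt : G t ≤ G a := hanti (left_mem_Icc.mpr hat) (right_mem_Icc.mpr hat) hat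
    have hGa : G a = 0 := by simp [hGdef, hEa]
    rw [hGa] at hGt
    simp only [hGdef, hEdef] at hGt
    have hEt : E t ≤ 0 := by
      by_contra h
      push_neg at h
      simp only [hEdef] at h
      nlinarith [Real.exp_pos (-(K * t))]
    have h0 := hE0 t
    simp only [hEdef] at hEt h0
    linarith
  · -- backward in time
    obtain ⟨M, hM⟩ := isCompact_Icc.exists_bound_of_continuousOn
      (s := Icc t a) hz1.continuous.continuousOn
    set M' : ℝ := max M 0 with hM'def
    have hM'0 : 0 ≤ M' := le_max_right _ _
    have hMx : ∀ x ∈ Icc t a, |z x| ≤ M' := fun x hx => by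
      have := hM x hx; rw [Real.norm_eq_abs] at this; exact this.trans (le_max_left _ _)
    set K : ℝ := 3 + 6 * M' with hKdef
    set G : ℝ → ℝ := fun x => E x * Real.exp (K * x) with hGdef
    have hGD : ∀ x, HasDerivAt G ((D x + K * E x) * Real.exp (K * x)) x := by
      intro x
      have he : HasDerivAt (fun y => Real.exp (K * y)) (Real.exp (K * x) * (K * 1)) x :=
        ((hasDerivAt_id x).const_mul K).exp
      have := (hED x).mul he
      exact this.congr_deriv (by ring)
    have hmono : MonotoneOn G (Icc t a) := by
      apply monotoneOn_of_deriv_nonneg (convex_Icc t a)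
      · exact (Continuous.continuousOn (by
          have : Differentiable ℝ G := fun x => (hGD x).differentiableAt
          exact this.continuous))
      · exact fun x _ => (hGD x).differentiableAt.differentiableWithinAt
      · intro x hx
        rw [interior_Icc] at hx
        rw [(hGD x).deriv]
        have hxI : x ∈ Icc t a := Ioo_subset_Icc_self hx
        have hc := abs_le.mp (hMx x hxI)
        have hDK : -(K * E x) ≤ D x := by
          simp only [hDdef, hEdef, hKdef]
          nlinarith [sq_nonneg (z x - 1 - deriv z x), sq_nonneg (z x - 1 + deriv z x),
            mul_nonneg (by linarith : (0:ℝ) ≤ M' - z x) (sq_nonneg (z x - 1 + deriv z x)),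
            mul_nonneg (by linarith : (0:ℝ) ≤ M' - z x) (sq_nonneg (z x - 1 - deriv z x)),
            mul_nonneg (by linarith : (0:ℝ) ≤ M' + z x) (sq_nonneg (z x - 1 + deriv z x)),
            mul_nonneg (by linarith : (0:ℝ) ≤ M' + z x) (sq_nonneg (z x - 1 - deriv z x)),
            mul_nonneg (by linarith : (0:ℝ) ≤ M' - z x) (sq_nonneg (deriv z x)),
            mul_nonneg (by linarith : (0:ℝ) ≤ M' + z x) (sq_nonneg (deriv z x)),
            mul_nonneg hM'0 (sq_nonneg (z x - 1))]
        exact mul_nonneg (by linarith) (Real.exp_pos _).le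
    have hGt : G t ≤ G a := hmono (left_mem_Icc.mpr hat) (right_mem_Icc.mpr hat) hat
    have hGa : G a = 0 := by simp [hGdef, hEa]
    rw [hGa] at hGt
    simp only [hGdef, hEdef] at hGt
    have hEt : E t ≤ 0 := by
      by_contra h
      push_neg at h
      simp only [hEdef] at h
      nlinarith [Real.exp_pos (K * t)]
    have h0 := hE0 t
    simp only [hEdef] at hEt h0
    linarith

lemma emden_mid (z : ℝ → ℝ) (hz1 : Differentiable ℝ z) (hz2 : Differentiable ℝ (deriv z))
    (hode : ∀ t : ℝ, deriv (deriv z) t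
      = (1 - 2 * z t) * deriv z t + 2 * (z t - (z t) ^ 2))
    (hζ : ∀ t : ℝ, 0 < deriv z t + z t)
    (τ₀ τ₁ : ℝ) (hlt : τ₀ < τ₁)
    (hzz : z τ₀ = z τ₁) (hzz' : deriv z τ₀ = deriv z τ₁) :
    ∃ a : ℝ, z a = 1 ∧ deriv z a = 0 := by
  set H : ℝ → ℝ := fun x =>
      (Real.log (deriv z x + z x) - deriv z x + z x - (z x) ^ 2) / 2 with hHdef
  have hHD : ∀ x, HasDerivAt H ((z x - 1) ^ 2) x := by
    intro x
    have hz1' : HasDerivAt z (deriv z x) x := (hz1 x).hasDerivAt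
    have hz2' : HasDerivAt (deriv z) (deriv (deriv z) x) x := (hz2 x).hasDerivAt
    have hu : HasDerivAt (fun y => deriv z y + z y) (deriv (deriv z) x + deriv z x) x :=
      hz2'.add hz1'
    have hlog : HasDerivAt (fun y => Real.log (deriv z y + z y))
        ((deriv z x + z x)⁻¹ * (deriv (deriv z) x + deriv z x)) x :=
      by have := (Real.hasDerivAt_log (ne_of_gt (hζ x))).comp x hu; exact this
    have hsq : HasDerivAt (fun y => (z y) ^ 2) (2 * z x ^ (2 - 1) * deriv z x) x :=
      hz1'.pow 2
    have hall := (((hlog.sub hz2').add hz1').sub hsq).div_const 2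
    refine hall.congr_deriv ?_
    symm
    rw [hode x]
    have hu0 : deriv z x + z x ≠ 0 := ne_of_gt (hζ x)
    field_simp
    ring
  have hmono : Monotone H :=
    monotone_of_deriv_nonneg (fun x => (hHD x).differentiableAt)
      (fun x => by rw [(hHD x).deriv]; positivity)
  have hH01 : H τ₀ = H τ₁ := by simp only [hHdef, hzz, hzz']
  have hconst : ∀ x ∈ Ioo τ₀ τ₁, H x = H τ₀ := fun x hx =>
    le_antisymm (hH01 ▸ hmono hx.2.le) (hmono hx.1.le)
  have hz1' : ∀ x ∈ Ioo τ₀ τ₁, z x = 1 := by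
    intro x hx
    have hev : H =ᶠ[nhds x] fun _ => H τ₀ :=
      eventually_of_mem (isOpen_Ioo.mem_nhds hx) hconst
    have hd0 : deriv H x = 0 := by rw [hev.deriv_eq]; simp
    rw [(hHD x).deriv] at hd0
    have := pow_eq_zero_iff (n := 2) (by norm_num) |>.mp hd0
    linarith [sub_eq_zero.mp this]
  refine ⟨(τ₀ + τ₁) / 2, hz1' _ (by constructor <;> linarith), ?_⟩
  have hev : z =ᶠ[nhds ((τ₀ + τ₁) / 2)] fun _ => 1 :=
    eventually_of_mem (isOpen_Ioo.mem_nhds (by constructor <;> linarith)) hz1'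
  rw [hev.deriv_eq]; simp

theorem stmt17 (z : ℝ → ℝ) (hz : ContDiff ℝ 2 z)
    (hode : ∀ t : ℝ, deriv (deriv z) t
      = (1 - 2 * z t) * deriv z t + 2 * (z t - (z t) ^ 2))
    (hζ : ∀ t : ℝ, 0 < deriv z t + z t)
    (τ₀ τ₁ : ℝ) (hne : τ₀ ≠ τ₁)
    (hzz : z τ₀ = z τ₁) (hzz' : deriv z τ₀ = deriv z τ₁) :
    ∀ t : ℝ, z t = 1 ∧ deriv z t = 0 := by
  have hz' : ContDiff ℝ ((1 : ℕ) + 1) z := by exact_mod_cast hz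
  have hz1 : Differentiable ℝ z := (contDiff_succ_iff_deriv.mp hz').1
  have hz2 : Differentiable ℝ (deriv z) :=
    (contDiff_succ_iff_deriv.mp hz').2.2.differentiable (by simp)
  obtain ⟨a, ha, ha'⟩ : ∃ a : ℝ, z a = 1 ∧ deriv z a = 0 := by
    rcases hne.lt_or_gt with h | h
    · exact emden_mid z hz1 hz2 hode hζ τ₀ τ₁ h hzz hzz'
    · exact emden_mid z hz1 hz2 hode hζ τ₁ τ₀ h hzz.symm hzz'.symm
  intro t
  have hsq := emden_prop z hz1 hz2 hode a ha ha' t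
  have h1 : (z t - 1) ^ 2 = 0 := by nlinarith [sq_nonneg (z t - 1), sq_nonneg (deriv z t)]
  have h2 : (deriv z t) ^ 2 = 0 := by nlinarith [sq_nonneg (z t - 1), sq_nonneg (deriv z t)]
  constructor
  · have := pow_eq_zero_iff (n := 2) (by norm_num) |>.mp h1
    linarith [sub_eq_zero.mp this]
  · exact pow_eq_zero_iff (n := 2) (by norm_num) |>.mp h2

end
end
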